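/- Let R be a commutative ring with identity that is not a local ring. Then the graph Γ_r(R) has diameter one (i.e., Γ_r(R) has at least two vertices and any two distinct vertices are adjacent) if and only if R is isomorphic to F₁ × F₂ for some fields F₁ and F₂. -/

import Mathlib

universe u

/-- The co-maximal graph `Ω(R)`: vertices are the elements of `R`, with distinct `x`, `y`
adjacent iff `Rx + Ry = R`. -/
def comaximalGraph (R : Type*) [CommRing R] : SimpleGraph R where
  Adj x y := x ≠ y ∧ Ideal.span {x} ⊔ Ideal.span {y} = ⊤
  symm := ⟨fun _ _ ⟨h1, h2⟩ => ⟨h1.symm, by rwa [sup_comm]⟩⟩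
  loopless := ⟨fun _ ⟨h, _⟩ => h rfl⟩

/-- Vertices of `Γ(R)`: the elements of `R \ (U(R) ∪ J(R))`. -/
def GammaVert (R : Type*) [CommRing R] : Type _ :=
  {x : R // ¬IsUnit x ∧ x ∉ (⊥ : Ideal R).jacobson}

/-- The graph `Γ(R)` induced on `R \ (U(R) ∪ J(R))`: distinct vertices `x`, `y` are
adjacent iff `Rx + Ry = R`. -/
def Gamma (R : Type*) [CommRing R] : SimpleGraph (GammaVert R) where
  Adj a b := a ≠ b ∧ Ideal.span {a.1} ⊔ Ideal.span {b.1} = ⊤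
  symm := ⟨fun _ _ ⟨h1, h2⟩ => ⟨h1.symm, by rwa [sup_comm]⟩⟩
  loopless := ⟨fun _ ⟨h, _⟩ => h rfl⟩

/-- Vertices of `Γ_r(R)`: the principal ideals `Rx` for `x ∈ R \ (U(R) ∪ J(R))`. -/
def GammaRVert (R : Type*) [CommRing R] : Type _ :=
  {I : Ideal R // ∃ x : R, ¬IsUnit x ∧ x ∉ (⊥ : Ideal R).jacobson ∧ I = Ideal.span {x}}

/-- The graph `Γ_r(R)` on `{Rx | x ∈ R \ (U(R) ∪ J(R))}`: distinct vertices `Rx`, `Ry`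
are adjacent iff `Rx + Ry = R`. -/
def GammaR (R : Type*) [CommRing R] : SimpleGraph (GammaRVert R) where
  Adj I J := I ≠ J ∧ I.1 ⊔ J.1 = ⊤
  symm := ⟨fun _ _ ⟨h1, h2⟩ => ⟨h1.symm, by rwa [sup_comm]⟩⟩
  loopless := ⟨fun _ ⟨h, _⟩ => h rfl⟩

/-- A simple graph is a split graph if its vertex set is the disjoint union of a set
inducing a complete graph and an independent set. -/
def IsSplitGraph {V : Type*} (G : SimpleGraph V) : Prop :=
  ∃ K D : Set V, K ∪ D = Set.univ ∧ K ∩ D = ∅ ∧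
    (∀ x ∈ K, ∀ y ∈ K, x ≠ y → G.Adj x y) ∧
    (∀ x ∈ D, ∀ y ∈ D, ¬G.Adj x y)

/-- A simple graph is bipartite if its vertex set is the disjoint union of two sets
such that every edge goes between them. -/
def IsBipartiteGraph {V : Type*} (G : SimpleGraph V) : Prop :=
  ∃ A B : Set V, A ∪ B = Set.univ ∧ A ∩ B = ∅ ∧
    ∀ x y, G.Adj x y → (x ∈ A ∧ y ∈ B) ∨ (x ∈ B ∧ y ∈ A)

/-- A simple graph is complete bipartite if its vertex set is the disjoint union of two
sets such that two vertices are adjacent iff they lie in different parts. -/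
def IsCompleteBipartiteGraph {V : Type*} (G : SimpleGraph V) : Prop :=
  ∃ A B : Set V, A ∪ B = Set.univ ∧ A ∩ B = ∅ ∧
    ∀ x y, G.Adj x y ↔ ((x ∈ A ∧ y ∈ B) ∨ (x ∈ B ∧ y ∈ A))

/-!
If any two distinct vertices of `Γ_r(R)` are adjacent, then two vertices inside a common
proper ideal generate the same ideal. For `x` in one maximal ideal but not in another, `x`
and `x²` are such vertices, so `Rx = Rx²` and `R` has an idempotent `e ≠ 0, 1`. For `t` in
a maximal ideal `m ⊇ Re`, the same applies to `e` and `e + t(1 - e)`, which forces `t ∈ Re`;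
so `Re` and, symmetrically, `R(1 - e)` are maximal, and `R ≅ R/Re × R/R(1 - e)`.
Conversely, every nonzero proper ideal of `F₁ × F₂` is maximal, distinct maximal ideals are
comaximal, and the idempotents `(1, 0)` and `(0, 1)` give two distinct vertices.
-/

namespace IsIdempotentElem

variable {R : Type*} [CommRing R] {e : R}

theorem notMem_jacobson_bot (he : IsIdempotentElem e) (h0 : e ≠ 0) :
    e ∉ (⊥ : Ideal R).jacobson := fun hJ ↦ by
  have hunit : IsUnit (1 - e) := by
    simpa [sub_eq_neg_add] using Ideal.mem_jacobson_bot.1 hJ (-1)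
  exact h0 (hunit.mul_left_eq_zero.1 he.mul_one_sub_self)

theorem not_isUnit (he : IsIdempotentElem e) (h1 : e ≠ 1) : ¬IsUnit e :=
  fun hu ↦ h1 ((IsIdempotentElem.iff_eq_one_of_isUnit hu).1 he)

end IsIdempotentElem

theorem Ideal.span_singleton_sup_span_one_sub {R : Type*} [CommRing R] (e : R) :
    Ideal.span {e} ⊔ Ideal.span {1 - e} = ⊤ :=
  (Ideal.isCoprime_span_singleton_iff e (1 - e)).2 ⟨1, 1, by ring⟩ |>.sup_eq

def GammaRVert.of {R : Type*} [CommRing R] (x : R) (hu : ¬IsUnit x)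
    (hJ : x ∉ (⊥ : Ideal R).jacobson) : GammaRVert R :=
  ⟨Ideal.span {x}, x, hu, hJ, rfl⟩

theorem GammaRVert.ne_bot {R : Type*} [CommRing R] (a : GammaRVert R) : a.1 ≠ ⊥ := by
  obtain ⟨x, -, hJ, hx⟩ := a.2
  rw [hx, Ne, Ideal.span_singleton_eq_bot]
  rintro rfl
  exact hJ (Submodule.zero_mem _)

theorem GammaRVert.ne_top {R : Type*} [CommRing R] (a : GammaRVert R) : a.1 ≠ ⊤ := by
  obtain ⟨x, hu, -, hx⟩ := a.2
  rwa [hx, Ne, Ideal.span_singleton_eq_top]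

theorem exists_ne_gammaRVert_of_isIdempotentElem {R : Type*} [CommRing R] {e : R}
    (he : IsIdempotentElem e) (h0 : e ≠ 0) (h1 : e ≠ 1) : ∃ a b : GammaRVert R, a ≠ b := by
  have hf0 : 1 - e ≠ 0 := sub_ne_zero.2 h1.symm
  have hf1 : 1 - e ≠ 1 := sub_eq_self.not.2 h0
  refine ⟨.of e (he.not_isUnit h1) (he.notMem_jacobson_bot h0),
    .of (1 - e) (he.one_sub.not_isUnit hf1) (he.one_sub.notMem_jacobson_bot hf0), fun h ↦ ?_⟩
  have hspan : Ideal.span {e} = Ideal.span {1 - e} := congrArg Subtype.val h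
  apply he.not_isUnit h1
  rw [← Ideal.span_singleton_eq_top, ← Ideal.span_singleton_sup_span_one_sub e, ← hspan,
    sup_idem]

section Complete

variable {R : Type*} [CommRing R]
  (hcomplete : ∀ a b : GammaRVert R, a ≠ b → (GammaR R).Adj a b)
include hcomplete

theorem span_eq_of_mem_of_ne_top {I : Ideal R} (hI : I ≠ ⊤) {x y : R} (hx : x ∈ I)
    (hy : y ∈ I) (hxJ : x ∉ (⊥ : Ideal R).jacobson) (hyJ : y ∉ (⊥ : Ideal R).jacobson) :
    Ideal.span {x} = Ideal.span {y} := by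
  by_contra hne
  have hcop := (hcomplete (.of x (fun hu ↦ hI (I.eq_top_of_isUnit_mem hx hu)) hxJ)
    (.of y (fun hu ↦ hI (I.eq_top_of_isUnit_mem hy hu)) hyJ)
    (fun h ↦ hne (congrArg Subtype.val h))).2
  apply hI
  rw [eq_top_iff, ← hcop]
  exact sup_le ((Ideal.span_singleton_le_iff_mem I).2 hx)
    ((Ideal.span_singleton_le_iff_mem I).2 hy)

theorem exists_isIdempotentElem_ne_zero_ne_one [Nontrivial R] (hloc : ¬IsLocalRing R) :
    ∃ e : R, IsIdempotentElem e ∧ e ≠ 0 ∧ e ≠ 1 := by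
  obtain ⟨m₁, hm₁⟩ := Ideal.exists_maximal R
  obtain ⟨m₂, hm₂, hne⟩ : ∃ m₂ : Ideal R, m₂.IsMaximal ∧ m₂ ≠ m₁ := by
    by_contra! h
    exact hloc (.of_unique_max_ideal ⟨m₁, hm₁, h⟩)
  obtain ⟨x, hx₁, hx₂⟩ := SetLike.not_le_iff_exists.1
    fun hle ↦ hne (hm₁.eq_of_le hm₂.ne_top hle).symm
  have hJ : (⊥ : Ideal R).jacobson ≤ m₂ := sInf_le ⟨bot_le, hm₂⟩
  have hspan := span_eq_of_mem_of_ne_top hcomplete hm₁.ne_top hx₁ (m₁.mul_mem_left x hx₁)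
    (fun h ↦ hx₂ (hJ h)) (fun h ↦ hm₂.isPrime.mul_notMem hx₂ hx₂ (hJ h))
  obtain ⟨c, hc⟩ := Ideal.mem_span_singleton'.1 (hspan ▸ Ideal.mem_span_singleton_self x)
  refine ⟨c * x, by unfold IsIdempotentElem; linear_combination c * hc, fun h0 ↦ ?_,
    fun h1 ↦ hm₁.ne_top (m₁.eq_top_of_isUnit_mem (h1 ▸ m₁.mul_mem_left c hx₁) isUnit_one)⟩
  apply hx₂
  rw [← hc, ← mul_assoc, h0, zero_mul]
  exact m₂.zero_mem

theorem isMaximal_span_of_isIdempotentElem {e : R} (he : IsIdempotentElem e) (h0 : e ≠ 0)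
    (h1 : e ≠ 1) : (Ideal.span {e}).IsMaximal := by
  obtain ⟨m, hm, hem⟩ := Ideal.exists_le_maximal _
    (Ideal.span_singleton_ne_top (he.not_isUnit h1))
  suffices m ≤ Ideal.span {e} from le_antisymm hem this ▸ hm
  intro t ht
  have he_mem : e ∈ m := hem (Ideal.mem_span_singleton_self e)
  -- `w = e + t(1 - e)` lies in `m` and satisfies `w e = e`, `w (1 - e) = t (1 - e)`
  have hw : e + t * (1 - e) ∈ m := m.add_mem he_mem (m.mul_mem_right _ ht)
  have hwJ : e + t * (1 - e) ∉ (⊥ : Ideal R).jacobson := fun h ↦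
    he.notMem_jacobson_bot h0 (by
      simpa [add_mul, mul_assoc, he.one_sub_mul_self, he.eq] using
        (⊥ : Ideal R).jacobson.mul_mem_right e h)
  obtain ⟨c, hc⟩ := Ideal.mem_span_singleton'.1
    (span_eq_of_mem_of_ne_top hcomplete hm.ne_top hw he_mem hwJ (he.notMem_jacobson_bot h0) ▸
      Ideal.mem_span_singleton_self _)
  have htf : t * (1 - e) = 0 := by
    linear_combination (e - 1) * hc - (c - 1 + t) * he.eq
  exact Ideal.mem_span_singleton'.2 ⟨t, by linear_combination -htf⟩

end Complete

theorem exists_ringEquiv_prod_field_of_isMaximal_span {R : Type u} [CommRing R] {e : R}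
    (he : IsIdempotentElem e) (h₁ : (Ideal.span {e}).IsMaximal)
    (h₂ : (Ideal.span {1 - e}).IsMaximal) :
    ∃ (F₁ F₂ : Type u) (_ : Field F₁) (_ : Field F₂), Nonempty (R ≃+* (F₁ × F₂)) :=
  ⟨_, _, Ideal.Quotient.field _, Ideal.Quotient.field _,
    ⟨(AlgEquiv.prodQuotientOfIsIdempotentElem ℤ he he.one_sub (add_sub_cancel e 1)
      he.mul_one_sub_self).toRingEquiv⟩⟩

theorem Ideal.isMaximal_prod_of_ne_bot_of_ne_top {F₁ F₂ : Type*} [Field F₁] [Field F₂]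
    {I : Ideal (F₁ × F₂)} (h0 : I ≠ ⊥) (h1 : I ≠ ⊤) : I.IsMaximal := by
  suffices I.IsPrime from IsArtinianRing.isMaximal_of_isPrime I
  rw [Ideal.ideal_prod_eq I] at h0 h1 ⊢
  rcases (I.map (RingHom.fst F₁ F₂)).eq_bot_or_top with h | h <;>
    rcases (I.map (RingHom.snd F₁ F₂)).eq_bot_or_top with h' | h' <;>
    rw [h, h'] at h0 h1 ⊢
  · exact absurd Ideal.prod_bot_bot h0
  · exact Ideal.isPrime_ideal_prod_top
  · exact Ideal.isPrime_ideal_prod_top'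
  · exact absurd Ideal.prod_top_top h1

theorem Ideal.isMaximal_of_ne_bot_of_ne_top_of_ringEquiv {R F₁ F₂ : Type*} [CommRing R]
    [Field F₁] [Field F₂] (g : R ≃+* F₁ × F₂) {I : Ideal R} (h0 : I ≠ ⊥) (h1 : I ≠ ⊤) :
    I.IsMaximal := by
  have hI : (I.map g).comap g = I := Ideal.comap_map_of_bijective _ g.bijective
  have : (I.map g).IsMaximal := Ideal.isMaximal_prod_of_ne_bot_of_ne_top
    ((Ideal.map_eq_bot_iff_of_injective g.injective).not.2 h0)
    (fun h ↦ h1 (by rw [← hI, h, Ideal.comap_top]))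
  exact hI ▸ Ideal.comap_isMaximal_of_equiv g

theorem gammaR_adj_of_isMaximal {R : Type*} [CommRing R]
    (hmax : ∀ I : Ideal R, I ≠ ⊥ → I ≠ ⊤ → I.IsMaximal) (a b : GammaRVert R) (hab : a ≠ b) :
    (GammaR R).Adj a b :=
  ⟨hab, (hmax _ a.ne_bot a.ne_top).coprime_of_ne (hmax _ b.ne_bot b.ne_top)
    (Subtype.val_injective.ne hab)⟩

/-- Corollary 4.7: for a non-local commutative ring `R`, the diameter of `Γ_r(R)` is one
(it has at least two vertices and any two distinct vertices are adjacent) iff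
`R ≅ F₁ × F₂` for some fields `F₁`, `F₂`. -/
theorem gammaR_diam_one_iff (R : Type u) [CommRing R] [Nontrivial R]
    (h : ¬IsLocalRing R) :
    ((∃ a b : GammaRVert R, a ≠ b) ∧
      ∀ a b : GammaRVert R, a ≠ b → (GammaR R).Adj a b) ↔
    (∃ (F₁ F₂ : Type u) (_ : Field F₁) (_ : Field F₂),
      Nonempty (R ≃+* (F₁ × F₂))) := by
  constructor
  · rintro ⟨-, hcomplete⟩
    obtain ⟨e, he, h0, h1⟩ := exists_isIdempotentElem_ne_zero_ne_one hcomplete h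
    exact exists_ringEquiv_prod_field_of_isMaximal_span he
      (isMaximal_span_of_isIdempotentElem hcomplete he h0 h1)
      (isMaximal_span_of_isIdempotentElem hcomplete he.one_sub (sub_ne_zero.2 h1.symm)
        (sub_eq_self.not.2 h0))
  · rintro ⟨F₁, F₂, _, _, ⟨g⟩⟩
    have he : IsIdempotentElem ((1, 0) : F₁ × F₂) := by simp [IsIdempotentElem]
    refine ⟨exists_ne_gammaRVert_of_isIdempotentElem (he.map g.symm)
      ((map_ne_zero_iff _ g.symm.injective).2 (by simp))
      ((map_ne_one_iff _ g.symm.injective).2 (by simp [Prod.ext_iff])),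
      gammaR_adj_of_isMaximal fun _ ↦ Ideal.isMaximal_of_ne_bot_of_ne_top_of_ringEquiv g⟩
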